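/- Let N ≥ 2 and let b¹,…,b^N : Ω → ℝ be differentiable functions on an open set Ω ⊆ ℝ² satisfying system (B). Define a⁰,…,a^{N-1} : Ω → ℝ as the coefficients of the monic polynomial with roots b¹,…,b^N, i.e. q^N + Σ_{k=0}^{N-1} a^k(x,t)·q^k = ∏_{m=1}^{N}(q − b^m(x,t)) for all q (so a^k = (−1)^{N−k}·e_{N−k}(b¹,…,b^N), where e_j is the j-th elementary symmetric polynomial, and a^{N-1} = −Σ b^m). Then a⁰,…,a^{N-1} satisfy system (A) with a^N ≡ 1. -/

import Mathlib

/-!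
Write `P(q) = ∏ₘ (q - bᵐ) = Σₖ aᵏ qᵏ` and `Pₘ(q) = ∏_{j ≠ m} (q - bʲ)`, so that every first
derivative of `P` is `-Σₘ (∂bᵐ) Pₘ`. Substituting system (B) and using `bᵐ Pₘ = q Pₘ - P` and
`Σₘ Pₘ = P'` turns the time derivative into
  `P_t = a^{N-1}_x (1 + q²) P' - N a^{N-1}_x q P + a^{N-1} q P_x`   (`a^{N-1} = -Σₘ bᵐ`),
whose coefficient of `qᵏ` is the `k`-th equation of system (A).
-/

/-- Partial derivative in the `x` direction (first coordinate). -/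
noncomputable def pdx (f : ℝ × ℝ → ℝ) (z : ℝ × ℝ) : ℝ := fderiv ℝ f z (1, 0)

/-- Partial derivative in the `t` direction (second coordinate). -/
noncomputable def pdt (f : ℝ × ℝ → ℝ) (z : ℝ × ℝ) : ℝ := fderiv ℝ f z (0, 1)

/-- System (A): the `N`-component hydrodynamic type system for the coefficients
`a⁰, …, a^{N-1}` (with `a^N ≡ 1`). -/
def SystemA (N : ℕ) (Ω : Set (ℝ × ℝ)) (a : ℕ → ℝ × ℝ → ℝ) : Prop :=
  ∀ z ∈ Ω,
    pdt (a 0) z = a 1 z * pdx (a (N - 1)) z ∧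
    ∀ k, 1 ≤ k → k ≤ N - 1 →
      pdt (a k) z =
        a (N - 1) z * pdx (a (k - 1)) z +
          (((k : ℝ) + 1) * a (k + 1) z - ((N : ℝ) + 1 - (k : ℝ)) * a (k - 1) z) *
            pdx (a (N - 1)) z

/-- System (B): the symmetric form of the hydrodynamic type system in the root
variables `b¹, …, b^N`. -/
def SystemB (N : ℕ) (Ω : Set (ℝ × ℝ)) (b : Fin N → ℝ × ℝ → ℝ) : Prop :=
  ∀ z ∈ Ω, ∀ k,
    pdt (b k) z =
      (1 + (b k z) ^ 2) * ∑ m, pdx (b m) z - (∑ n, b n z) * b k z * pdx (b k) z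

open Polynomial Finset

section RootProduct

variable {R : Type*} [CommRing R] {ι : Type*} [Fintype ι] (r : ι → R)

noncomputable def rootProd : R[X] := ∏ i, (X - C (r i))

lemma coeff_rootProd_card_pred (hι : 0 < Fintype.card ι) :
    (rootProd r).coeff (Fintype.card ι - 1) = -∑ i, r i :=
  prod_X_sub_C_coeff_card_pred univ r hι

variable [DecidableEq ι]

noncomputable def rootProdErase (i : ι) : R[X] := ∏ j ∈ univ.erase i, (X - C (r j))

lemma X_sub_C_mul_rootProdErase (i : ι) : (X - C (r i)) * rootProdErase r i = rootProd r :=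
  mul_prod_erase univ (fun j => X - C (r j)) (mem_univ i)

lemma derivative_rootProd : derivative (rootProd r) = ∑ i, rootProdErase r i := by
  simp [rootProd, rootProdErase, derivative_prod_finset]

lemma sum_C_mul_mul_rootProdErase (c : ι → R) :
    ∑ i, C (r i * c i) * rootProdErase r i
      = X * ∑ i, C (c i) * rootProdErase r i - C (∑ i, c i) * rootProd r := by
  have h (i : ι) : C (r i * c i) * rootProdErase r i
      = X * (C (c i) * rootProdErase r i) - C (c i) * rootProd r := by
    rw [← X_sub_C_mul_rootProdErase r i, map_mul]
    ring
  simp only [h, sum_sub_distrib, mul_sum, map_sum, sum_mul]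

lemma sum_C_mul_rootProdErase_of_systemB (rx rt : ι → R)
    (hrt : ∀ i, rt i = (1 + r i ^ 2) * ∑ j, rx j - (∑ j, r j) * r i * rx i) :
    ∑ i, C (rt i) * rootProdErase r i =
      C (∑ j, rx j) * ((1 + X ^ 2) * derivative (rootProd r))
        - C (Fintype.card ι * ∑ j, rx j) * (X * rootProd r)
        - C (∑ j, r j) * (X * ∑ i, C (rx i) * rootProdErase r i) := by
  have h1 := sum_C_mul_mul_rootProdErase r 1
  simp only [Pi.one_apply, mul_one, map_one, one_mul, sum_const, card_univ, nsmul_eq_mul] at h1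
  have hterm (i : ι) : C (rt i) * rootProdErase r i = C (∑ j, rx j) * rootProdErase r i
      + C (∑ j, rx j) * (C (r i * r i) * rootProdErase r i)
      - C (∑ j, r j) * (C (r i * rx i) * rootProdErase r i) := by
    rw [hrt]
    simp only [map_mul, map_sub, map_add, map_one, map_pow]
    ring
  rw [sum_congr rfl fun i _ => hterm i, sum_sub_distrib, sum_add_distrib, ← mul_sum, ← mul_sum,
    ← mul_sum, sum_C_mul_mul_rootProdErase, h1, sum_C_mul_mul_rootProdErase,
    ← derivative_rootProd, map_mul, map_natCast]
  ring

end RootProduct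

section Coefficients

variable {R : Type*} [CommRing R]

noncomputable def polyOfCoeffs (n : ℕ) (c : ℕ → R) : R[X] := ∑ k ∈ range n, C (c k) * X ^ k

lemma coeff_polyOfCoeffs (n : ℕ) (c : ℕ → R) (k : ℕ) :
    (polyOfCoeffs n c).coeff k = if k < n then c k else 0 := by
  simp [polyOfCoeffs, coeff_C_mul, coeff_X_pow]

lemma polyOfCoeffs_succ (n : ℕ) (c : ℕ → R) :
    polyOfCoeffs (n + 1) c = polyOfCoeffs n c + C (c n) * X ^ n :=
  sum_range_succ _ n

lemma eval_polyOfCoeffs (n : ℕ) (c : ℕ → R) (q : R) :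
    (polyOfCoeffs n c).eval q = ∑ k ∈ range n, c k * q ^ k := by
  simp [polyOfCoeffs, eval_finsetSum]

lemma systemA_relations_of_polyOfCoeffs_eq {N : ℕ} (hN : 0 < N) (a dx dt : ℕ → R)
    (h : polyOfCoeffs N dt =
      C (dx (N - 1)) * ((1 + X ^ 2) * derivative (polyOfCoeffs (N + 1) a))
        - C (N * dx (N - 1)) * (X * polyOfCoeffs (N + 1) a)
        + C (a (N - 1)) * (X * polyOfCoeffs N dx)) :
    dt 0 = a 1 * dx (N - 1) ∧
      ∀ k, 1 ≤ k → k ≤ N - 1 →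
        dt k = a (N - 1) * dx (k - 1) +
          (((k : R) + 1) * a (k + 1) - ((N : R) + 1 - k) * a (k - 1)) * dx (N - 1) := by
  have hcoeff (k : ℕ) := congrArg (coeff · k) h
  simp only [coeff_add, coeff_sub, coeff_C_mul, add_mul, one_mul, coeff_X_pow_mul',
    coeff_derivative, coeff_polyOfCoeffs] at hcoeff
  refine ⟨?_, fun k hk1 hkN => ?_⟩
  · simpa [hN, mul_comm] using hcoeff 0
  · obtain ⟨j, rfl⟩ : ∃ j, k = j + 1 := ⟨k - 1, by omega⟩
    have hj := hcoeff (j + 1)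
    have hjN : j < N := by omega
    simp only [coeff_X_mul, coeff_polyOfCoeffs, hjN, show j + 1 < N by omega,
      show j < N + 1 by omega, if_true] at hj
    rw [hj]
    rcases j with _ | j
    · rw [if_pos (by omega), if_neg (by omega)]
      push_cast
      ring
    · rw [if_pos (by omega), if_pos (by omega), if_pos (by omega), Nat.add_sub_cancel]
      push_cast
      ring

lemma X_pow_add_polyOfCoeffs_eq_rootProd [IsDomain R] [Infinite R] {N : ℕ} {a : ℕ → R}
    {b : Fin N → R} (ha : ∀ q, q ^ N + ∑ k ∈ range N, a k * q ^ k = ∏ m, (q - b m)) :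
    X ^ N + polyOfCoeffs N a = rootProd b :=
  Polynomial.funext fun q => by
    simpa [eval_polyOfCoeffs, rootProd, eval_prod] using ha q

lemma eq_neg_sum_of_prod_sub_eq [IsDomain R] [Infinite R] {N : ℕ} (hN : 0 < N) {a : ℕ → R}
    {b : Fin N → R} (ha : ∀ q, q ^ N + ∑ k ∈ range N, a k * q ^ k = ∏ m, (q - b m)) :
    a (N - 1) = -∑ m, b m := by
  have hcoeff := congrArg (coeff · (N - 1)) (X_pow_add_polyOfCoeffs_eq_rootProd ha)
  have htop := coeff_rootProd_card_pred b (by simpa using hN)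
  simp only [coeff_add, coeff_X_pow, coeff_polyOfCoeffs, Fintype.card_fin] at hcoeff htop
  simpa [hN, show N - 1 ≠ N by omega, htop] using hcoeff

end Coefficients

section Analysis

variable {E : Type*} [NormedAddCommGroup E] [NormedSpace ℝ E] {N : ℕ} {a : ℕ → E → ℝ}
  {b : Fin N → E → ℝ} {z : E}

lemma differentiableAt_of_prod_sub_eq
    (ha : ∀ w, ∀ q : ℝ, q ^ N + ∑ k ∈ range N, a k w * q ^ k = ∏ m, (q - b m w))
    (hb : ∀ m, DifferentiableAt ℝ (b m) z) {k : ℕ} (hk : k < N) :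
    DifferentiableAt ℝ (a k) z := by
  have hvieta (w : E) : a k w = ∑ t ∈ univ.powersetCard (N - k), ∏ i ∈ t, -b i w := by
    have hcoeff := congrArg (coeff · k) (X_pow_add_polyOfCoeffs_eq_rootProd (ha w))
    simp only [coeff_add, coeff_X_pow, coeff_polyOfCoeffs, hk, hk.ne, if_true, if_false,
      zero_add] at hcoeff
    rw [hcoeff, rootProd]
    simpa [sub_eq_add_neg] using prod_X_add_C_coeff univ (fun i => -b i w) (by simpa using hk.le)
  rw [funext hvieta]
  fun_prop

lemma polyOfCoeffs_fderiv_eq_of_prod_sub_eq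
    (ha : ∀ w, ∀ q : ℝ, q ^ N + ∑ k ∈ range N, a k w * q ^ k = ∏ m, (q - b m w))
    (hb : ∀ m, DifferentiableAt ℝ (b m) z) (v : E) :
    polyOfCoeffs N (fun k => fderiv ℝ (a k) z v)
      = -∑ m, C (fderiv ℝ (b m) z v) * rootProdErase (b · z) m := by
  refine Polynomial.funext fun q => ?_
  have hL : HasFDerivAt (fun w => q ^ N + ∑ k ∈ range N, a k w * q ^ k)
      (∑ k ∈ range N, q ^ k • fderiv ℝ (a k) z) z :=
    (HasFDerivAt.fun_sum fun k hk => (differentiableAt_of_prod_sub_eq ha hb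
      (mem_range.mp hk)).hasFDerivAt.mul_const _).const_add _
  have hR : HasFDerivAt (fun w => ∏ m, (q - b m w))
      (∑ m, (∏ j ∈ univ.erase m, (q - b j z)) • -fderiv ℝ (b m) z) z :=
    HasFDerivAt.finsetProd fun m _ => (hb m).hasFDerivAt.const_sub q
  have hv := congrArg (· v) (hL.unique (by simpa only [ha] using hR))
  simp only [eval_polyOfCoeffs, rootProdErase, eval_neg, eval_finsetSum, eval_mul, eval_C,
    eval_prod, eval_sub, eval_X]
  simpa [_root_.sum_apply, mul_comm] using hv

lemma fderiv_pred_eq_neg_sum_of_prod_sub_eq (hN : 0 < N)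
    (ha : ∀ w, ∀ q : ℝ, q ^ N + ∑ k ∈ range N, a k w * q ^ k = ∏ m, (q - b m w))
    (hb : ∀ m, DifferentiableAt ℝ (b m) z) (v : E) :
    fderiv ℝ (a (N - 1)) z v = -∑ m, fderiv ℝ (b m) z v := by
  rw [show a (N - 1) = fun w => -∑ m, b m w from
      funext fun w => eq_neg_sum_of_prod_sub_eq hN (ha w),
    (HasFDerivAt.fun_sum fun m _ => (hb m).hasFDerivAt).fun_neg.fderiv]
  simp [_root_.sum_apply]

end Analysis

/-- if `b¹, …, b^N` solve system (B) and `a⁰, …, a^{N-1}` are the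
coefficients of the monic polynomial with roots `b¹, …, b^N`, i.e.
`q^N + Σ_{k<N} a^k q^k = ∏_m (q − b^m)` for all `q` (with `a^N ≡ 1`), then the `a^k`
satisfy system (A). -/
theorem statement11 (N : ℕ) (hN : 2 ≤ N) (Ω : Set (ℝ × ℝ)) (hΩ : IsOpen Ω)
    (b : Fin N → ℝ × ℝ → ℝ)
    (hb : ∀ k, DifferentiableOn ℝ (b k) Ω)
    (hB : SystemB N Ω b)
    (a : ℕ → ℝ × ℝ → ℝ)
    (ha : ∀ z, ∀ q : ℝ,
      q ^ N + ∑ k ∈ Finset.range N, a k z * q ^ k = ∏ m, (q - b m z))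
    (haN : ∀ z, a N z = 1) :
    SystemA N Ω a := by
  intro z hz
  have hN0 : 0 < N := by omega
  have hbz (m : Fin N) : DifferentiableAt ℝ (b m) z := (hb m).differentiableAt (hΩ.mem_nhds hz)
  have hP : polyOfCoeffs (N + 1) (a · z) = rootProd (b · z) := by
    rw [polyOfCoeffs_succ, haN, map_one, one_mul, add_comm]
    exact X_pow_add_polyOfCoeffs_eq_rootProd (ha z)
  have hPx : polyOfCoeffs N (fun k => pdx (a k) z)
      = -∑ m, C (pdx (b m) z) * rootProdErase (b · z) m :=
    polyOfCoeffs_fderiv_eq_of_prod_sub_eq ha hbz _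
  have hPt : polyOfCoeffs N (fun k => pdt (a k) z)
      = -∑ m, C (pdt (b m) z) * rootProdErase (b · z) m :=
    polyOfCoeffs_fderiv_eq_of_prod_sub_eq ha hbz _
  refine systemA_relations_of_polyOfCoeffs_eq hN0 (a · z) (fun k => pdx (a k) z)
    (fun k => pdt (a k) z) ?_
  rw [hPt, hP, hPx, eq_neg_sum_of_prod_sub_eq hN0 (ha z),
    show pdx (a (N - 1)) z = -∑ m, pdx (b m) z from
      fderiv_pred_eq_neg_sum_of_prod_sub_eq hN0 ha hbz _,
    sum_C_mul_rootProdErase_of_systemB _ _ _ (hB z hz)]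
  simp only [Fintype.card_fin, map_neg, map_mul, map_natCast, map_sum]
  ring
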